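/- arXiv:2605.12209 — 3 statements merged into one kernel-verified Lean document; each statement's English description precedes it below -/
import Mathlib

section
/- The set {M ∈ Sym_d(F_q) : M V₁ = 0}, where V₁ ∈ F_q^{d×ℓ} consists of ℓ linearly independent columns, has cardinality q^{(d−ℓ)(d−ℓ+1)/2}. -/
/-!
Extend the columns of `V₁` to a basis of `F^(ℓ+k)`; the change-of-basis matrix `P` is invertible
and has `V₁` as its first `ℓ` columns. The congruence `M ↦ Pᵀ M P` preserves symmetry and turns
`M V₁ = 0` into the vanishing of the first `ℓ` columns of `Pᵀ M P`. A symmetric matrix whose first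
`ℓ` columns vanish has its first `ℓ` rows vanish too, so it is `diag(0, A)` with `A` an arbitrary
symmetric `k × k` matrix. Symmetric `k × k` matrices are functions on `Sym2 (Fin k)`, a set of
`(k + 1).choose 2 = k(k+1)/2` elements.
-/

open Matrix

namespace Matrix

variable {l n m₁ m₂ α R : Type*}

def isSymmEquivSym2 : {A : Matrix n n α // A.IsSymm} ≃ (Sym2 n → α) :=
  (Equiv.subtypeEquivRight fun A => by rw [IsSymm.ext_iff, forall_comm]).trans Sym2.lift

theorem natCard_isSymm [Finite n] :
    Nat.card {A : Matrix n n α // A.IsSymm} = Nat.card α ^ (Nat.card n + 1).choose 2 := by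
  rw [Nat.card_congr isSymmEquivSym2, Nat.card_fun, Sym2.natCard]

theorem mul_toCols₁ [Fintype n] [Mul R] [AddCommMonoid R] (A : Matrix l n R)
    (B : Matrix n (m₁ ⊕ m₂) R) : (A * B).toCols₁ = A * B.toCols₁ :=
  rfl

def isSymmToCols₁EqZeroEquiv [Zero R] :
    {N : Matrix (m₁ ⊕ m₂) (m₁ ⊕ m₂) R // N.IsSymm ∧ N.toCols₁ = 0} ≃
      {A : Matrix m₂ m₂ R // A.IsSymm} where
  toFun N := ⟨N.1.toBlocks₂₂, by
    have hS := N.2.1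
    rw [← fromBlocks_toBlocks N.1, isSymm_fromBlocks_iff] at hS
    exact hS.2.2.2⟩
  invFun A := ⟨fromBlocks 0 0 0 A.1, by
    refine ⟨isSymm_fromBlocks_iff.2 ⟨isSymm_zero, by simp, by simp, A.2⟩, ?_⟩
    ext (i | i) j <;> simp⟩
  left_inv N := by
    obtain ⟨N, hS, h0⟩ := N
    refine Subtype.ext (?_ : fromBlocks 0 0 0 N.toBlocks₂₂ = N)
    have h₁₁ : N.toBlocks₁₁ = 0 := by ext i j; exact congr_fun₂ h0 (Sum.inl i) j
    have h₂₁ : N.toBlocks₂₁ = 0 := by ext i j; exact congr_fun₂ h0 (Sum.inr i) j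
    have h₁₂ : N.toBlocks₂₁ᵀ = N.toBlocks₁₂ := by
      rw [← fromBlocks_toBlocks N, isSymm_fromBlocks_iff] at hS
      exact hS.2.2.1
    conv_rhs => rw [← fromBlocks_toBlocks N]
    rw [← h₁₂, h₁₁, h₂₁, transpose_zero]
  right_inv A := by
    ext1
    simp

variable [CommRing R] [Fintype n] [Fintype m₁] [Fintype m₂] [DecidableEq n] [DecidableEq m₁]
  [DecidableEq m₂]

def isSymmMulToCols₁EqZeroCongr {P : Matrix n (m₁ ⊕ m₂) R} {Q : Matrix (m₁ ⊕ m₂) n R}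
    (hPQ : P * Q = 1) (hQP : Q * P = 1) :
    {M : Matrix n n R // M.IsSymm ∧ M * P.toCols₁ = 0} ≃
      {N : Matrix (m₁ ⊕ m₂) (m₁ ⊕ m₂) R // N.IsSymm ∧ N.toCols₁ = 0} where
  toFun M := ⟨Pᵀ * M.1 * P, by
    refine ⟨?_, ?_⟩
    · simp [IsSymm, Matrix.mul_assoc, M.2.1.eq]
    · rw [Matrix.mul_assoc, mul_toCols₁, mul_toCols₁, M.2.2, Matrix.mul_zero]⟩
  invFun N := ⟨Qᵀ * N.1 * Q, by
    refine ⟨?_, ?_⟩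
    · simp [IsSymm, Matrix.mul_assoc, N.2.1.eq]
    · rw [Matrix.mul_assoc, Matrix.mul_assoc, ← mul_toCols₁, hQP, ← mul_toCols₁, Matrix.mul_one,
        N.2.2, Matrix.mul_zero]⟩
  left_inv M := by
    ext1
    simp only
    rw [← Matrix.mul_assoc, ← Matrix.mul_assoc, ← transpose_mul, hPQ, Matrix.mul_assoc, hPQ]
    simp
  right_inv N := by
    ext1
    simp only
    rw [← Matrix.mul_assoc, ← Matrix.mul_assoc, ← transpose_mul, hQP, Matrix.mul_assoc, hQP]
    simp

end Matrix

theorem Module.Basis.sumExtend_apply_inl {K V ι : Type*} [Field K] [AddCommGroup V] [Module K V]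
    {v : ι → V} (hv : LinearIndependent K v) (i : ι) : sumExtend hv (Sum.inl i) = v i := by
  rw [sumExtend, reindex_apply, coe_extend]
  rfl

theorem LinearIndependent.exists_basis_sum_fin {K V ι : Type*} [Field K] [AddCommGroup V]
    [Module K V] [Fintype ι] [FiniteDimensional K V] {k : ℕ}
    (hV : Module.finrank K V = Fintype.card ι + k) {v : ι → V} (hv : LinearIndependent K v) :
    ∃ b : Module.Basis (ι ⊕ Fin k) K V, ∀ i, b (Sum.inl i) = v i := by
  let b := Module.Basis.sumExtend hv
  have : Finite (ι ⊕ Module.Basis.sumExtendIndex hv) := Module.Finite.finite_basis b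
  have : Finite (Module.Basis.sumExtendIndex hv) :=
    Finite.of_injective (Sum.inr (α := ι)) Sum.inr_injective
  have hcard : Nat.card (Module.Basis.sumExtendIndex hv) = k := by
    have := Module.finrank_eq_nat_card_basis b
    rw [Nat.card_sum, Nat.card_eq_fintype_card (α := ι)] at this
    omega
  exact ⟨b.reindex (Equiv.sumCongr (.refl ι) (Finite.equivFinOfCardEq hcard)), fun i => by
    simp [b, Module.Basis.sumExtend_apply_inl]⟩

theorem Matrix.exists_toCols₁_eq_of_linearIndependent {K n ι : Type*} [Field K] [Fintype n]
    [DecidableEq n] [Fintype ι] [DecidableEq ι] {k : ℕ} (hn : Fintype.card n = Fintype.card ι + k)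
    {V : Matrix n ι K} (hV : LinearIndependent K Vᵀ) :
    ∃ (P : Matrix n (ι ⊕ Fin k) K) (Q : Matrix (ι ⊕ Fin k) n K),
      P * Q = 1 ∧ Q * P = 1 ∧ P.toCols₁ = V := by
  obtain ⟨b, hb⟩ := hV.exists_basis_sum_fin (by rwa [Module.finrank_fintype_fun_eq_card])
  refine ⟨(Pi.basisFun K n).toMatrix b, b.toMatrix (Pi.basisFun K n),
    Module.Basis.toMatrix_mul_toMatrix_flip _ _, Module.Basis.toMatrix_mul_toMatrix_flip _ _, ?_⟩
  ext i j
  simp [toCols₁_apply, Module.Basis.toMatrix_apply, hb]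

/-- If `V₁ ∈ F_q^{d × ℓ}` has `ℓ` linearly independent columns (here `d = ℓ + k`), then the
set `{M ∈ Sym_d(F_q) : M V₁ = 0}` has cardinality `q ^ ((d-ℓ)(d-ℓ+1)/2) = q ^ (k(k+1)/2)`. -/
theorem card_symm_annihilator {ℓ k q : ℕ} (F : Type) [Field F] [Fintype F]
    (hF : Fintype.card F = q)
    (V₁ : Matrix (Fin (ℓ + k)) (Fin ℓ) F)
    (hli : LinearIndependent F fun j : Fin ℓ => fun i : Fin (ℓ + k) => V₁ i j) :
    Nat.card {M : Matrix (Fin (ℓ + k)) (Fin (ℓ + k)) F // M.IsSymm ∧ M * V₁ = 0}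
      = q ^ (k * (k + 1) / 2) := by
  obtain ⟨P, Q, hPQ, hQP, rfl⟩ :=
    exists_toCols₁_eq_of_linearIndependent (V := V₁) (k := k) (by simp) hli
  rw [Nat.card_congr ((isSymmMulToCols₁EqZeroCongr hPQ hQP).trans isSymmToCols₁EqZeroEquiv),
    natCard_isSymm, Nat.card_eq_fintype_card, hF, Nat.card_fin, Nat.choose_two_right,
    Nat.add_sub_cancel, Nat.mul_comm]
end

section
/- (Converse for secure key-cast) Consider the network with source s, terminal t, and intermediate nodes v₁,...,v_d, where s is connected to each v_i by d parallel unit-capacity edges and each v_i is connected to t by a single unit-capacity edge. For any blocklength-n key-code producing a key K with H(K | X_t) = 0 and I(K; {X_v : v ∈ β}) = 0 for every set β of at most ℓ intermediate nodes, it holds that H(K) ≤ (d−ℓ) n log q, i.e., the secure key rate is at most d−ℓ. -/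
/-!
Fix a set `β` of `min ℓ d` intermediate nodes and a sample point `ω₀` of positive probability.
The event `E` that the nodes of `β` receive exactly what they receive at `ω₀` has positive
probability and, by secrecy, is independent of the key, so every key value of positive
probability also occurs on `E`. On `E` the messages of the nodes in `β` are fixed, so the key is
a function of the `d - ℓ` remaining messages, each taking at most `q ^ n` values. Hence the key
has at most `q ^ (n (d - ℓ))` values of positive probability, and its entropy is at most the
logarithm of that number.
-/

open Classical in
/-- Probability of an event `E` under a (real-valued) pmf `μ` on a finite sample space. -/
noncomputable def pr {Ω : Type*} [Fintype Ω] (μ : Ω → ℝ) (E : Set Ω) : ℝ :=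
  ∑ ω : Ω, if ω ∈ E then μ ω else 0

/-- Shannon entropy (in nats) of the random variable `X` under the pmf `μ`. -/
noncomputable def ent {Ω α : Type*} [Fintype Ω] [Fintype α] (μ : Ω → ℝ) (X : Ω → α) : ℝ :=
  ∑ a : α, Real.negMulLog (pr μ {ω | X ω = a})

open Finset Real

theorem sum_negMulLog_le_log_card {ι : Type*} (s : Finset ι) (p : ι → ℝ)
    (h0 : ∀ i ∈ s, 0 ≤ p i) (h1 : ∑ i ∈ s, p i = 1) :
    ∑ i ∈ s, negMulLog (p i) ≤ log #s := by
  have hs : s.Nonempty := nonempty_of_sum_ne_zero (h1 ▸ one_ne_zero)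
  have hc : (0 : ℝ) < #s := by exact_mod_cast hs.card_pos
  have jensen : ∑ i ∈ s, (#s : ℝ)⁻¹ • negMulLog (p i)
      ≤ negMulLog (∑ i ∈ s, (#s : ℝ)⁻¹ • p i) :=
    concaveOn_negMulLog.le_map_sum (fun _ _ => by positivity)
      (by simp [hc.ne']) (fun i hi => Set.mem_Ici.mpr (h0 i hi))
  rw [← smul_sum, ← smul_sum, h1, smul_eq_mul, smul_eq_mul, mul_one, negMulLog,
    log_inv] at jensen
  calc ∑ i ∈ s, negMulLog (p i) = #s * ((#s : ℝ)⁻¹ * ∑ i ∈ s, negMulLog (p i)) := by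
        field_simp
    _ ≤ #s * (-(#s : ℝ)⁻¹ * -log #s) := by gcongr
    _ = log #s := by field_simp

section Probability

variable {Ω : Type*} [Fintype Ω] {μ : Ω → ℝ}

theorem pr_nonneg (hμ0 : ∀ ω, 0 ≤ μ ω) (E : Set Ω) : 0 ≤ pr μ E := by
  classical
  exact sum_nonneg fun ω _ => by split_ifs <;> simp [hμ0 ω]

theorem le_pr_of_mem (hμ0 : ∀ ω, 0 ≤ μ ω) {E : Set Ω} {ω₀ : Ω} (h : ω₀ ∈ E) :
    μ ω₀ ≤ pr μ E := by
  classical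
  simpa [pr, h] using single_le_sum (f := fun ω => if ω ∈ E then μ ω else 0)
    (fun ω _ => by split_ifs <;> simp [hμ0 ω]) (mem_univ ω₀)

theorem nonempty_of_pr_ne_zero {E : Set Ω} (h : pr μ E ≠ 0) : E.Nonempty := by
  classical
  obtain ⟨ω, -, hω⟩ := exists_ne_zero_of_sum_ne_zero h
  exact ⟨ω, by_contra fun hE => hω (if_neg hE)⟩

theorem sum_pr_fiber {α : Type*} [Fintype α] (hμ1 : ∑ ω, μ ω = 1) (X : Ω → α) :
    ∑ a, pr μ {ω | X ω = a} = 1 := by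
  classical
  rw [← hμ1]
  unfold pr
  rw [sum_comm]
  simp

theorem ent_le_log_card_of_subset {α : Type*} [Fintype α] (hμ0 : ∀ ω, 0 ≤ μ ω)
    (hμ1 : ∑ ω, μ ω = 1) (X : Ω → α) (s : Finset α)
    (hs : ∀ a, pr μ {ω | X ω = a} ≠ 0 → a ∈ s) :
    ent μ X ≤ log #s := by
  have hzero : ∀ a ∈ univ, a ∉ s → pr μ {ω | X ω = a} = 0 :=
    fun a _ ha => by_contra (ha ∘ hs a)
  have hsum : ∑ a ∈ s, pr μ {ω | X ω = a} = 1 := by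
    rw [sum_subset (subset_univ s) hzero, sum_pr_fiber hμ1]
  rw [ent, ← sum_subset (subset_univ s) fun a ha has => by rw [hzero a ha has, negMulLog_zero]]
  exact sum_negMulLog_le_log_card s _ (fun a _ => pr_nonneg hμ0 _) hsum

theorem ent_le_log_card_of_indep_event {𝒦 γ : Type*} [Fintype 𝒦] [Fintype γ]
    (hμ0 : ∀ ω, 0 ≤ μ ω) (hμ1 : ∑ ω, μ ω = 1) (K : Ω → 𝒦) (V : Ω → γ) (f : γ → 𝒦)
    (E : Set Ω) (hE : pr μ E ≠ 0)
    (hind : ∀ k, pr μ {ω | K ω = k ∧ ω ∈ E} = pr μ {ω | K ω = k} * pr μ E)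
    (hKV : ∀ ω ∈ E, K ω = f (V ω)) :
    ent μ K ≤ log (Fintype.card γ) := by
  classical
  refine (ent_le_log_card_of_subset hμ0 hμ1 K (univ.image f) fun k hk => ?_).trans ?_
  · obtain ⟨ω, rfl, hωE⟩ := nonempty_of_pr_ne_zero (μ := μ)
      (show pr μ {ω | K ω = k ∧ ω ∈ E} ≠ 0 by rw [hind]; exact mul_ne_zero hk hE)
    exact mem_image.mpr ⟨V ω, mem_univ _, (hKV ω hωE).symm⟩
  · obtain ⟨ω, -⟩ := nonempty_of_pr_ne_zero hE
    gcongr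
    · exact_mod_cast card_pos.mpr ⟨f (V ω), mem_image_of_mem f (mem_univ _)⟩
    · exact card_image_le

end Probability

theorem keycast_converse_general {d ℓ n q : ℕ}
    {Ω 𝒦 : Type} [Fintype Ω] [Fintype 𝒦]
    (μ : Ω → ℝ) (hμ0 : ∀ ω, 0 ≤ μ ω) (hμ1 : ∑ ω : Ω, μ ω = 1)
    (K : Ω → 𝒦)
    (Z : Fin d → Ω → (Fin d → Fin n → Fin q))
    (Y : Fin d → Ω → (Fin n → Fin q))
    (henc : ∀ i, ∃ φ : (Fin d → Fin n → Fin q) → (Fin n → Fin q),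
      ∀ ω, Y i ω = φ (Z i ω))
    (hdec : ∃ g : (Fin d → Fin n → Fin q) → 𝒦, ∀ ω, K ω = g (fun i => Y i ω))
    (hsec : ∀ β : Finset (Fin d), β.card ≤ ℓ →
      ∀ (kk : 𝒦) (zs : Fin d → Fin d → Fin n → Fin q),
        pr μ {ω | K ω = kk ∧ ∀ i ∈ β, Z i ω = zs i}
          = pr μ {ω | K ω = kk} * pr μ {ω | ∀ i ∈ β, Z i ω = zs i}) :
    ent μ K ≤ ((d - ℓ : ℕ) : ℝ) * n * Real.log q := by
  classical
  obtain ⟨g, hg⟩ := hdec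
  choose φ hφ using henc
  obtain ⟨β, -, hβ⟩ := exists_subset_card_eq (s := (univ : Finset (Fin d))) (n := min ℓ d)
    (by simp)
  obtain ⟨ω₀, -, hω₀⟩ := exists_ne_zero_of_sum_ne_zero (hμ1 ▸ one_ne_zero)
  set E : Set Ω := {ω | ∀ i ∈ β, Z i ω = Z i ω₀}
  have hE : pr μ E ≠ 0 :=
    ((hμ0 ω₀).lt_of_ne' hω₀ |>.trans_le (le_pr_of_mem hμ0 (E := E) fun _ _ => rfl)).ne'
  let V : Ω → {i // i ∉ β} → Fin n → Fin q := fun ω j => Y j ω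
  let f : ({i // i ∉ β} → Fin n → Fin q) → 𝒦 :=
    fun w => g fun i => if h : i ∈ β then φ i (Z i ω₀) else w ⟨i, h⟩
  have hKV : ∀ ω ∈ E, K ω = f (V ω) := by
    intro ω hω
    rw [hg ω]
    congr 1
    funext i
    split_ifs with h
    · rw [hφ, hω i h]
    · rfl
  have hcard : Fintype.card ({i // i ∉ β} → Fin n → Fin q) = (q ^ n) ^ (d - ℓ) := by
    simp [Fintype.card_subtype_compl, hβ, show d - min ℓ d = d - ℓ by omega]
  calc ent μ K ≤ log (Fintype.card ({i // i ∉ β} → Fin n → Fin q)) :=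
        ent_le_log_card_of_indep_event hμ0 hμ1 K V f E hE
          (fun k => hsec β (hβ ▸ min_le_left ℓ d) k _) hKV
    _ = ((d - ℓ : ℕ) : ℝ) * n * log q := by
        rw [hcard]; push_cast; rw [log_pow, log_pow]; ring

/-- Converse for secure key-cast on the network with source `s`, terminal `t`, and
intermediate nodes `v₁, …, v_d`, where `s` sends `Z i` (over `d` parallel unit-capacity
edges) to node `v i`, node `v i` sends the message `Y i` (a function of `Z i`) over its
unit-capacity edge to `t`, and `t` observes `X_t = (Y 1, …, Y d)`.  If the key `K` is
decodable from `X_t` and is independent of the observation of every set `β` of at most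
`ℓ ≤ d` intermediate nodes, then `H(K) ≤ (d - ℓ) n log q`. -/
theorem keycast_converse {d ℓ n q : ℕ} (hℓ : ℓ ≤ d) (hq : 0 < q)
    {Ω 𝒦 : Type} [Fintype Ω] [Fintype 𝒦]
    (μ : Ω → ℝ) (hμ0 : ∀ ω, 0 ≤ μ ω) (hμ1 : ∑ ω : Ω, μ ω = 1)
    (K : Ω → 𝒦)
    (Z : Fin d → Ω → (Fin d → Fin n → Fin q))
    (Y : Fin d → Ω → (Fin n → Fin q))
    (henc : ∀ i, ∃ φ : (Fin d → Fin n → Fin q) → (Fin n → Fin q),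
      ∀ ω, Y i ω = φ (Z i ω))
    (hdec : ∃ g : (Fin d → Fin n → Fin q) → 𝒦, ∀ ω, K ω = g (fun i => Y i ω))
    (hsec : ∀ β : Finset (Fin d), β.card ≤ ℓ →
      ∀ (kk : 𝒦) (zs : Fin d → Fin d → Fin n → Fin q),
        pr μ {ω | K ω = kk ∧ ∀ i ∈ β, Z i ω = zs i}
          = pr μ {ω | K ω = kk} * pr μ {ω | ∀ i ∈ β, Z i ω = zs i}) :
    ent μ K ≤ ((d - ℓ : ℕ) : ℝ) * n * Real.log q :=
  keycast_converse_general μ hμ0 hμ1 K Z Y henc hdec hsec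
end

section
/- Suppose a node v is d-vertex connected from the source s (there exist d internally vertex-disjoint unit-capacity paths from s to v), and an eavesdropper may observe any set of at most ℓ < d intermediate nodes (excluding s and v). Then s can transmit a message x ∈ F_q^{d−ℓ} to v such that v recovers x exactly and the eavesdropper's observation is statistically independent of x, by sending Shamir share f(i) along the i-th path. -/
/-!
Share `i` is the value at a nonzero point `pᵢ` of the polynomial whose low `k` coefficients
are the secret and whose high `ℓ` coefficients are the pad, i.e. the shares are
`vandermonde p *ᵥ (x ++ r)`. The receiver inverts the Vandermonde matrix. For fixed `x`, any
`ℓ` observed shares are an affine function of `r` whose linear part has rows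
`(p^k, p^(k+1), …, p^(k+ℓ-1))`: a Vandermonde matrix with its rows scaled by the nonzero `pᵢ^k`.
It is invertible, so the observation is a bijective image of the uniform pad.
-/

open Matrix Function

theorem Matrix.mulVec_finAppend {R m : Type*} [CommRing R] {k ℓ : ℕ}
    (A : Matrix m (Fin (k + ℓ)) R) (x : Fin k → R) (r : Fin ℓ → R) :
    A *ᵥ Fin.append x r =
      A.submatrix id (Fin.castAdd ℓ) *ᵥ x + A.submatrix id (Fin.natAdd k) *ᵥ r := by
  ext i
  simp [mulVec, dotProduct, Fin.sum_univ_add]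

theorem Matrix.det_of_pow_add {R : Type*} [CommRing R] {n : ℕ} (v : Fin n → R) (k : ℕ) :
    (of fun i j : Fin n => v i ^ (k + j)).det = (∏ i, v i ^ k) * (vandermonde v).det := by
  rw [← det_mul_column]
  simp [vandermonde_apply, pow_add]

theorem Matrix.bijective_add_mulVec {K m : Type*} [Field K] [Fintype m] [DecidableEq m]
    {A : Matrix m m K} (hA : IsUnit A) (b : m → K) : Bijective fun r => b + A *ᵥ r :=
  (Equiv.addLeft b).bijective.comp
    ⟨mulVec_injective_iff_isUnit.mpr hA, mulVec_surjective_iff_isUnit.mpr hA⟩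

theorem exists_injective_ne_zero_of_lt_card {F : Type*} [Field F] [Fintype F] {n : ℕ}
    (hn : n < Fintype.card F) : ∃ p : Fin n → F, Injective p ∧ ∀ i, p i ≠ 0 := by
  classical
  obtain ⟨e⟩ : Nonempty (Fin n ↪ Fˣ) :=
    Embedding.nonempty_of_card_le (by rw [Fintype.card_fin, Fintype.card_units]; omega)
  exact ⟨fun i => e i, Units.val_injective.comp e.injective, fun i => (e i).ne_zero⟩

namespace Shamir

variable {F : Type*} [Field F] {k ℓ : ℕ}

noncomputable def encode (p : Fin (k + ℓ) → F) (x : Fin k → F) (r : Fin ℓ → F) :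
    Fin (k + ℓ) → F :=
  vandermonde p *ᵥ Fin.append x r

noncomputable def decode (p : Fin (k + ℓ) → F) (y : Fin (k + ℓ) → F) : Fin k → F :=
  fun j => ((vandermonde p)⁻¹ *ᵥ y) (Fin.castAdd ℓ j)

variable {p : Fin (k + ℓ) → F}

theorem decode_encode (hp : Injective p) (x : Fin k → F) (r : Fin ℓ → F) :
    decode p (encode p x r) = x := by
  have hV : IsUnit (vandermonde p).det := (det_vandermonde_ne_zero_iff.mpr hp).isUnit
  ext j
  simp [decode, encode, mulVec_mulVec, nonsing_inv_mul _ hV]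

theorem isUnit_vandermonde_submatrix_natAdd (hp : Injective p) (hp0 : ∀ i, p i ≠ 0)
    {O : Fin ℓ → Fin (k + ℓ)} (hO : Injective O) :
    IsUnit ((vandermonde p).submatrix O (Fin.natAdd k)) := by
  have hM : (vandermonde p).submatrix O (Fin.natAdd k) =
      of fun t (s : Fin ℓ) => (p ∘ O) t ^ (k + s) := rfl
  rw [isUnit_iff_isUnit_det, hM, det_of_pow_add]
  exact (Finset.prod_ne_zero_iff.mpr fun t _ => pow_ne_zero _ (hp0 _)).isUnit.mul
    (det_vandermonde_ne_zero_iff.mpr (hp.comp hO)).isUnit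

theorem encode_comp_eq (O : Fin ℓ → Fin (k + ℓ)) (x : Fin k → F) (r : Fin ℓ → F) :
    encode p x r ∘ O =
      (vandermonde p).submatrix O (Fin.castAdd ℓ) *ᵥ x +
        (vandermonde p).submatrix O (Fin.natAdd k) *ᵥ r := by
  ext t
  simp only [encode, Function.comp_apply, mulVec_finAppend, Pi.add_apply]
  rfl

theorem bijective_encode_comp (hp : Injective p) (hp0 : ∀ i, p i ≠ 0)
    {O : Fin ℓ → Fin (k + ℓ)} (hO : Injective O) (x : Fin k → F) :
    Bijective fun r => encode p x r ∘ O := by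
  simpa only [encode_comp_eq] using
    bijective_add_mulVec (isUnit_vandermonde_submatrix_natAdd hp hp0 hO) _

end Shamir

/-- Secure transmission over `d = k + ℓ` vertex-disjoint paths: if a node `v` is
`d`-vertex connected from the source `s` and an eavesdropper may observe any `ℓ < d`
intermediate nodes (equivalently, any `ℓ` of the `d` disjoint paths, hence any `ℓ` of the
`d` shares), then `s` can transmit `x ∈ F_q^{d-ℓ}` so that `v` recovers `x` exactly while
the eavesdropper's observation is statistically independent of `x`: there is an encoding
of `(x, r)` into `d` shares (one per path) together with a decoder, such that for every
injective choice `O` of `ℓ` observed paths and every secret `x`, the map from the uniform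
pad `r` to the observed shares is a bijection (so the observation is uniform,
independently of `x`). -/
theorem secure_transmission_d_connected {k ℓ : ℕ} (F : Type) [Field F] [Fintype F]
    (hq : k + ℓ < Fintype.card F) :
    ∃ (enc : (Fin k → F) → (Fin ℓ → F) → (Fin (k + ℓ) → F))
      (dec : (Fin (k + ℓ) → F) → (Fin k → F)),
      (∀ x r, dec (enc x r) = x) ∧
      (∀ O : Fin ℓ → Fin (k + ℓ), Function.Injective O → ∀ x : Fin k → F,
        Function.Bijective (fun r : Fin ℓ → F => fun t : Fin ℓ => enc x r (O t))) := by
  obtain ⟨p, hp, hp0⟩ := exists_injective_ne_zero_of_lt_card hq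
  exact ⟨Shamir.encode p, Shamir.decode p, Shamir.decode_encode hp,
    fun _ hO x => Shamir.bijective_encode_comp hp hp0 hO x⟩
end
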